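/- arXiv:2401.15499 — 6 statements merged into one kernel-verified Lean document; each statement's English description precedes it below -/
import Mathlib

section
/- Let x_1,...,x_n be real numbers with empirical mean μ = (1/n)Σx_i and empirical standard deviation σ = sqrt((1/n)Σ(x_i-μ)²) > 0. Then for any subset S ⊆ {1,...,n} of size m, |Σ_{i∈S} (x_i - μ)/σ| ≤ sqrt(m·(n-m)). -/
/-!
Write `yᵢ = xᵢ - μ`, `T = ∑_{i ∈ S} yᵢ`. Since `∑ᵢ yᵢ = 0`, the sum over the complement of `S`
is `-T`, so Cauchy–Schwarz on `S` and on `Sᶜ` gives `T² ≤ m A` and `T² ≤ (n - m) B`, where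
`A + B = ∑ᵢ yᵢ² = n σ²`. Weighting these by `n - m` and `m` and adding yields
`n T² ≤ m (n - m) n σ²`.
-/

open Finset

theorem sum_sub_average_eq_zero {ι : Type*} [Fintype ι] [Nonempty ι] (x : ι → ℝ) :
    ∑ i, (x i - (∑ j, x j) / Fintype.card ι) = 0 := by
  have hcard : (Fintype.card ι : ℝ) ≠ 0 := by exact_mod_cast Fintype.card_ne_zero
  rw [sum_sub_distrib, sum_const, card_univ, nsmul_eq_mul, mul_div_cancel₀ _ hcard, sub_self]

theorem card_mul_sq_sum_le_of_sum_eq_zero {ι : Type*} [Fintype ι] [DecidableEq ι]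
    (y : ι → ℝ) (hy : ∑ i, y i = 0) (s : Finset ι) :
    Fintype.card ι * (∑ i ∈ s, y i) ^ 2 ≤ #s * (Fintype.card ι - #s) * ∑ i, y i ^ 2 := by
  have hcompl : ∑ i ∈ sᶜ, y i = -∑ i ∈ s, y i := by
    rw [eq_neg_iff_add_eq_zero, add_comm, sum_add_sum_compl, hy]
  have hcard_compl : (#sᶜ : ℝ) = Fintype.card ι - #s := by
    rw [card_compl, Nat.cast_sub (card_le_univ s)]
  have hin := sq_sum_le_card_mul_sum_sq (s := s) (f := y)
  have hout := sq_sum_le_card_mul_sum_sq (s := sᶜ) (f := y)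
  rw [hcompl, neg_sq, hcard_compl] at hout
  have hcard_le : (#s : ℝ) ≤ Fintype.card ι := by exact_mod_cast card_le_univ s
  rw [← sum_add_sum_compl s (fun i ↦ y i ^ 2)]
  nlinarith [mul_le_mul_of_nonneg_left hin (sub_nonneg.2 hcard_le),
    mul_le_mul_of_nonneg_left hout (Nat.cast_nonneg (α := ℝ) #s)]

/-- Standardized-sum bound: for real numbers `x 1, ..., x n` with empirical mean `μ`
and positive empirical standard deviation `σ`, and any subset `S` of size `m`,
`|∑ i in S, (x i - μ)/σ| ≤ √(m(n-m))`. -/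
theorem standardized_sum_bound (n : ℕ) (hn : 0 < n) (x : Fin n → ℝ) (μ σ : ℝ)
    (hμ : μ = (∑ i, x i) / n)
    (hσdef : σ = Real.sqrt ((∑ i, (x i - μ) ^ 2) / n))
    (hσ : 0 < σ)
    (S : Finset (Fin n)) (m : ℕ) (hm : S.card = m) :
    |∑ i ∈ S, (x i - μ) / σ| ≤ Real.sqrt (m * (n - m)) := by
  have : NeZero n := ⟨hn.ne'⟩
  have hnR : (0 : ℝ) < n := by exact_mod_cast hn
  have hcentered : ∑ i, (x i - μ) = 0 := by
    simpa [hμ] using sum_sub_average_eq_zero x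
  have hvar : ∑ i, (x i - μ) ^ 2 = n * σ ^ 2 := by
    rw [hσdef, Real.sq_sqrt (by positivity), mul_div_cancel₀ _ hnR.ne']
  have hbound := card_mul_sq_sum_le_of_sum_eq_zero _ hcentered S
  rw [hvar, Fintype.card_fin, hm] at hbound
  have hsq : (∑ i ∈ S, (x i - μ)) ^ 2 ≤ m * (n - m) * σ ^ 2 :=
    le_of_mul_le_mul_left (by linear_combination hbound) hnR
  rw [← sum_div, abs_div, abs_of_pos hσ, div_le_iff₀ hσ, ← Real.sqrt_sq_eq_abs,
    ← Real.sqrt_sq hσ.le, ← Real.sqrt_mul' _ (sq_nonneg σ)]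
  exact Real.sqrt_le_sqrt hsq
end

section
/- With notation as in the standardized-sum bound, if 0 < m < n, the bound sqrt(m(n-m)) is attained by a subset S of size m if and only if all x_i with i ∈ S have a common value and all x_i with i ∉ S have a common value, namely x_i = μ + s·sqrt((n-m)/m)·σ for i ∈ S and x_i = μ - s·sqrt(m/(n-m))·σ for i ∉ S, for some s ∈ {-1,1}. -/
/-!
Standardize `y i = (x i - μ) / σ`, so that `∑ y = 0` and `∑ y² = n`, and let `T = ∑_{i ∈ S} y i`.
Subtracting from `y` its mean `T / m` on `S` and its mean `-T / (n - m)` off `S` gives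
`∑_S (y - T/m)² + ∑_{Sᶜ} (y + T/(n-m))² = n - T² n / (m (n - m))`,
so `T² ≤ m (n - m)`, with equality exactly when `y` is constant on `S` and on its complement.
-/

open Finset

namespace Real

theorem mul_sqrt_div_eq_sqrt_mul {a : ℝ} (ha : 0 ≤ a) (b : ℝ) : a * √(b / a) = √(a * b) := by
  rcases ha.eq_or_lt with rfl | ha
  · simp
  calc a * √(b / a) = √(a ^ 2) * √(b / a) := by rw [sqrt_sq ha.le]
    _ = √(a ^ 2 * (b / a)) := (sqrt_mul (sq_nonneg a) _).symm
    _ = √(a * b) := by congr 1; field_simp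

end Real

namespace Finset

variable {ι : Type*}

theorem sum_sub_sum_div_card (s : Finset ι) (x : ι → ℝ) :
    ∑ i ∈ s, (x i - (∑ j ∈ s, x j) / #s) = 0 := by
  rcases s.eq_empty_or_nonempty with rfl | hs
  · simp
  rw [sum_sub_distrib, sum_const, nsmul_eq_mul, mul_div_cancel₀ _ (by positivity), sub_self]

theorem sum_sq_div_sqrt_mean_sq_eq_card (s : Finset ι) (z : ι → ℝ)
    (h : √((∑ i ∈ s, z i ^ 2) / #s) ≠ 0) :
    ∑ i ∈ s, (z i / √((∑ i ∈ s, z i ^ 2) / #s)) ^ 2 = #s := by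
  have hmean : (∑ i ∈ s, z i ^ 2) / #s ≠ 0 := fun h0 ↦ h (by rw [h0, Real.sqrt_zero])
  simp only [div_pow, ← sum_div]
  rw [Real.sq_sqrt (by positivity), div_div_cancel₀ ((div_ne_zero_iff.1 hmean).1)]

theorem sum_sq_sub_sum_div_card (s : Finset ι) (y : ι → ℝ) :
    ∑ i ∈ s, (y i - (∑ j ∈ s, y j) / #s) ^ 2 = ∑ i ∈ s, y i ^ 2 - (∑ i ∈ s, y i) ^ 2 / #s := by
  rcases s.eq_empty_or_nonempty with rfl | hs
  · simp
  have hk : (#s : ℝ) ≠ 0 := by positivity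
  simp only [sub_sq, sum_add_distrib, sum_sub_distrib, ← sum_mul, ← mul_sum, sum_const, nsmul_eq_mul]
  field_simp
  ring

theorem sum_sq_sub_eq_zero_iff (s : Finset ι) (y : ι → ℝ) (c : ℝ) :
    ∑ i ∈ s, (y i - c) ^ 2 = 0 ↔ ∀ i ∈ s, y i = c := by
  rw [sum_eq_zero_iff_of_nonneg fun i _ ↦ sq_nonneg _]
  simp only [sq_eq_zero_iff, sub_eq_zero]

end Finset

section BlockMeans

variable {ι : Type*} [Fintype ι] [DecidableEq ι]

theorem sq_sum_eq_iff_eq_block_means (y : ι → ℝ) (S : Finset ι) (hy : ∑ i, y i = 0)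
    (hS : S.Nonempty) (hSc : Sᶜ.Nonempty) :
    (∑ i ∈ S, y i) ^ 2 = #S * #Sᶜ / Fintype.card ι * ∑ i, y i ^ 2 ↔
      (∀ i ∈ S, y i = (∑ j ∈ S, y j) / #S) ∧ ∀ i ∉ S, y i = -(∑ j ∈ S, y j) / #Sᶜ := by
  set T := ∑ i ∈ S, y i
  have hk : (0 : ℝ) < #S := by exact_mod_cast hS.card_pos
  have hl : (0 : ℝ) < #Sᶜ := by exact_mod_cast hSc.card_pos
  have hn : (Fintype.card ι : ℝ) = #S + #Sᶜ := by exact_mod_cast (card_add_card_compl S).symm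
  have hTc : ∑ i ∈ Sᶜ, y i = -T := by
    linarith [sum_add_sum_compl S y]
  have hdev : ∑ i ∈ S, (y i - T / #S) ^ 2 + ∑ i ∈ Sᶜ, (y i - -T / #Sᶜ) ^ 2 =
      (#S + #Sᶜ) / (#S * #Sᶜ) * (#S * #Sᶜ / (#S + #Sᶜ) * ∑ i, y i ^ 2 - T ^ 2) := by
    have hSc_dev := sum_sq_sub_sum_div_card Sᶜ y
    rw [hTc] at hSc_dev
    rw [sum_sq_sub_sum_div_card, hSc_dev, ← sum_add_sum_compl S fun i ↦ y i ^ 2]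
    field_simp
    ring
  have hdev_zero := add_eq_zero_iff_of_nonneg
    (sum_nonneg (s := S) fun i _ ↦ sq_nonneg (y i - T / #S))
    (sum_nonneg (s := Sᶜ) fun i _ ↦ sq_nonneg (y i - -T / #Sᶜ))
  rw [hdev, mul_eq_zero, or_iff_right (by positivity), sub_eq_zero, ← hn, eq_comm,
    sum_sq_sub_eq_zero_iff, sum_sq_sub_eq_zero_iff] at hdev_zero
  simpa only [mem_compl] using hdev_zero

theorem abs_sum_eq_sqrt_iff (y : ι → ℝ) (S : Finset ι) (hy : ∑ i, y i = 0)
    (hy2 : ∑ i, y i ^ 2 = Fintype.card ι) (hS : S.Nonempty) (hSc : Sᶜ.Nonempty) :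
    |∑ i ∈ S, y i| = √(#S * #Sᶜ) ↔
      ∃ s : ℝ, (s = 1 ∨ s = -1) ∧
        (∀ i ∈ S, y i = s * √(#Sᶜ / #S)) ∧ ∀ i ∉ S, y i = -s * √(#S / #Sᶜ) := by
  have hk : (0 : ℝ) < #S := by exact_mod_cast hS.card_pos
  have hl : (0 : ℝ) < #Sᶜ := by exact_mod_cast hSc.card_pos
  have hkl : √(#S * #Sᶜ) = #S * √(#Sᶜ / #S) := (Real.mul_sqrt_div_eq_sqrt_mul hk.le _).symm
  have hlk : √(#S * #Sᶜ) = #Sᶜ * √(#S / #Sᶜ) := by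
    rw [mul_comm, Real.mul_sqrt_div_eq_sqrt_mul hl.le]
  constructor
  · intro hT
    have hn : (Fintype.card ι : ℝ) ≠ 0 := by
      exact_mod_cast (Fintype.card_pos_iff.2 ⟨hS.choose⟩).ne'
    have hT2 : (∑ i ∈ S, y i) ^ 2 = #S * #Sᶜ / Fintype.card ι * ∑ i, y i ^ 2 := by
      rw [hy2, div_mul_cancel₀ _ hn, ← sq_abs, hT, Real.sq_sqrt (by positivity)]
    obtain ⟨hyS, hySc⟩ := (sq_sum_eq_iff_eq_block_means y S hy hS hSc).1 hT2
    generalize ∑ i ∈ S, y i = T at hT hyS hySc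
    obtain ⟨s, hs, hTs⟩ : ∃ s : ℝ, (s = 1 ∨ s = -1) ∧ T = s * √(#S * #Sᶜ) := by
      rcases (abs_eq (Real.sqrt_nonneg _)).1 hT with hT | hT
      · exact ⟨1, .inl rfl, by rw [hT, one_mul]⟩
      · exact ⟨-1, .inr rfl, by rw [hT, neg_one_mul]⟩
    refine ⟨s, hs, fun i hi ↦ ?_, fun i hi ↦ ?_⟩
    · rw [hyS i hi, hTs, hkl]
      field_simp
    · rw [hySc i hi, hTs, hlk]
      field_simp
  · rintro ⟨s, hs, hyS, -⟩
    have hs_abs : |s| = 1 := by rcases hs with rfl | rfl <;> simp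
    rw [sum_congr rfl hyS, sum_const, nsmul_eq_mul, abs_mul, abs_mul, hs_abs, abs_of_pos hk,
      abs_of_nonneg (Real.sqrt_nonneg _), one_mul, hkl]

end BlockMeans

/-- Equality case of the standardized-sum bound: for `0 < m < n`, the bound `√(m(n-m))`
is attained by a subset `S` of size `m` iff there is a sign `s ∈ {-1,1}` such that
`x i = μ + s·√((n-m)/m)·σ` for `i ∈ S` and `x i = μ - s·√(m/(n-m))·σ` for `i ∉ S`. -/
theorem standardized_sum_bound_eq_iff (n : ℕ) (x : Fin n → ℝ) (μ σ : ℝ)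
    (hμ : μ = (∑ i, x i) / n)
    (hσdef : σ = Real.sqrt ((∑ i, (x i - μ) ^ 2) / n))
    (hσ : 0 < σ)
    (S : Finset (Fin n)) (m : ℕ) (hm : S.card = m) (hm0 : 0 < m) (hmn : m < n) :
    |∑ i ∈ S, (x i - μ) / σ| = Real.sqrt (m * (n - m)) ↔
      ∃ s : ℝ, (s = 1 ∨ s = -1) ∧
        (∀ i ∈ S, x i = μ + s * Real.sqrt (((n : ℝ) - m) / m) * σ) ∧
        (∀ i ∉ S, x i = μ - s * Real.sqrt ((m : ℝ) / ((n : ℝ) - m)) * σ) := by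
  have hy0 : ∑ i, (x i - μ) / σ = 0 := by
    have h := sum_sub_sum_div_card univ x
    rw [card_fin] at h
    rw [← sum_div, hμ, h, zero_div]
  have hy2 : ∑ i, ((x i - μ) / σ) ^ 2 = Fintype.card (Fin n) := by
    have h := sum_sq_div_sqrt_mean_sq_eq_card univ fun i ↦ x i - μ
    rw [card_fin, ← hσdef] at h
    rw [Fintype.card_fin]
    exact h hσ.ne'
  have hS : S.Nonempty := card_pos.1 (hm ▸ hm0)
  have hSc : (#Sᶜ : ℝ) = n - m := by
    rw [card_compl, Fintype.card_fin, hm, Nat.cast_sub hmn.le]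
  have hSc_ne : Sᶜ.Nonempty := card_pos.1 (by rw [card_compl, Fintype.card_fin, hm]; omega)
  have hattained := abs_sum_eq_sqrt_iff _ S hy0 hy2 hS hSc_ne
  rw [hm, hSc] at hattained
  rw [hattained]
  refine exists_congr fun s ↦ and_congr_right fun _ ↦
    and_congr (forall₂_congr fun i _ ↦ ?_) (forall₂_congr fun i _ ↦ ?_) <;>
  · rw [div_eq_iff hσ.ne']
    constructor <;> intro h <;> linarith
end

section
/- The WEAT effect size is not unbiased-trustworthy: there exist dimension d ≥ 2, unit vectors a, b (attribute sets A={a}, B={b}) and targets t_1, t_2, t_3, t_4 such that the effect size d({t_1,t_2},{t_3,t_4},A,B) = 0 while s(t_1,A) ≠ s(t_1,B), i.e., t_1 is individually biased. -/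
/-!
Take orthonormal attribute vectors `a, b` and the targets `t₁ = t₃ = a`, `t₂ = t₄ = b`.
The associations `s(t) = cos(t, a) - cos(t, b)` are then `1, -1, 1, -1`: both target
groups have mean association `0` and the standard deviation is `1`, so the effect size
vanishes although `t₁` is as biased as possible.
-/

/-- Cosine similarity in `ℝ^d`. -/
noncomputable def cosSim {d : ℕ} (u v : EuclideanSpace ℝ (Fin d)) : ℝ :=
  (inner ℝ u v : ℝ) / (‖u‖ * ‖v‖)

theorem cosSim_orthonormal {d : ℕ} {ι : Type*} [DecidableEq ι]
    {e : ι → EuclideanSpace ℝ (Fin d)} (he : Orthonormal ℝ e) (i j : ι) :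
    cosSim (e i) (e j) = if i = j then 1 else 0 := by
  rw [cosSim, he.1 i, he.1 j, orthonormal_iff_ite.mp he i j]
  simp

/-- WEAT's effect size is not unbiased-trustworthy: there are a dimension `d ≥ 2`,
unit attribute vectors `a, b` and nonzero targets `t₁, t₂, t₃, t₄` such that the
effect size `d({t₁,t₂},{t₃,t₄},{a},{b})` is well-defined (positive standard
deviation of the associations) and equals `0`, while `s(t₁,{a}) ≠ s(t₁,{b})`. -/
theorem weat_effect_size_not_unbiased_trustworthy :
    ∃ (d : ℕ), 2 ≤ d ∧ ∃ (a b t₁ t₂ t₃ t₄ : EuclideanSpace ℝ (Fin d)),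
      ‖a‖ = 1 ∧ ‖b‖ = 1 ∧ t₁ ≠ 0 ∧ t₂ ≠ 0 ∧ t₃ ≠ 0 ∧ t₄ ≠ 0 ∧
      (let s : EuclideanSpace ℝ (Fin d) → ℝ := fun w => cosSim w a - cosSim w b
       let μ : ℝ := (s t₁ + s t₂ + s t₃ + s t₄) / 4
       let σ : ℝ := Real.sqrt (((s t₁ - μ) ^ 2 + (s t₂ - μ) ^ 2
            + (s t₃ - μ) ^ 2 + (s t₄ - μ) ^ 2) / 4)
       0 < σ ∧ ((s t₁ + s t₂) / 2 - (s t₃ + s t₄) / 2) / σ = 0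
         ∧ cosSim t₁ a ≠ cosSim t₁ b) := by
  set e := EuclideanSpace.basisFun (Fin 2) ℝ
  have he : Orthonormal ℝ e := e.orthonormal
  refine ⟨2, le_rfl, e 0, e 1, e 0, e 1, e 0, e 1, he.1 0, he.1 1,
    he.ne_zero 0, he.ne_zero 1, he.ne_zero 0, he.ne_zero 1, ?_⟩
  simp only [cosSim_orthonormal he]
  norm_num
end

section
/- The Direct Bias is not unbiased-trustworthy: in ℝ², with attribute pairs a_1 = (−x, rx), c_1 = −a_1, a_2 = (−x, −rx), c_2 = −a_2 for x > 0 and r > 1, the unit vector b = (0,1) maximizes the variance objective v ↦ Σ_i (v·a_i)² + (v·c_i)² over unit vectors v (i.e., b is a first principal component of the centered defining sets), yet the target t = (0,1), which satisfies s(t,{a_1,a_2}) = s(t,{c_1,c_2}), has |cos(t,b)| = 1 (maximal Direct Bias instead of 0). -/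
/-- Dot product in ℝ². -/
def dot2 (u v : ℝ × ℝ) : ℝ := u.1 * v.1 + u.2 * v.2

/-- Euclidean norm in ℝ². -/
noncomputable def nrm2 (u : ℝ × ℝ) : ℝ := Real.sqrt (u.1 ^ 2 + u.2 ^ 2)

/-- Cosine similarity in ℝ². -/
noncomputable def cos2 (u v : ℝ × ℝ) : ℝ := dot2 u v / (nrm2 u * nrm2 v)

/-- The Direct Bias is not unbiased-trustworthy: with `a₁ = (−x, rx) = −c₁`,
`a₂ = (−x, −rx) = −c₂`, `x > 0`, `r > 1`, the unit vector `b = (0,1)` maximizes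
the PCA variance objective `v ↦ Σᵢ (v·aᵢ)² + (v·cᵢ)²` over unit vectors, yet the
target `t = (0,1)`, which is unbiased (`s(t,{a₁,a₂}) = s(t,{c₁,c₂})`), gets the
maximal Direct Bias `|cos(t,b)| = 1` instead of `0`. -/
theorem directBias_not_unbiased_trustworthy_overestimates (x r : ℝ) (hx : 0 < x) (hr : 1 < r)
    (a₁ a₂ c₁ c₂ b t : ℝ × ℝ)
    (ha₁ : a₁ = (-x, r * x)) (hc₁ : c₁ = (x, -(r * x)))
    (ha₂ : a₂ = (-x, -(r * x))) (hc₂ : c₂ = (x, r * x))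
    (hb : b = (0, 1)) (ht : t = (0, 1)) :
    nrm2 b = 1 ∧
    (∀ v : ℝ × ℝ, nrm2 v = 1 →
        dot2 v a₁ ^ 2 + dot2 v c₁ ^ 2 + dot2 v a₂ ^ 2 + dot2 v c₂ ^ 2 ≤
        dot2 b a₁ ^ 2 + dot2 b c₁ ^ 2 + dot2 b a₂ ^ 2 + dot2 b c₂ ^ 2) ∧
    (1 / 2 : ℝ) * (cos2 t a₁ + cos2 t a₂) = (1 / 2 : ℝ) * (cos2 t c₁ + cos2 t c₂) ∧
    |cos2 t b| = 1 := by
  subst ha₁ hc₁ ha₂ hc₂ hb ht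
  have hnb : nrm2 ((0:ℝ),(1:ℝ)) = 1 := by
    simp [nrm2]
  refine ⟨hnb, ?_, ?_, ?_⟩
  · intro v hv
    have hv1 : v.1 ^ 2 + v.2 ^ 2 = 1 := by
      have h0 : (0:ℝ) ≤ v.1 ^ 2 + v.2 ^ 2 := by positivity
      have := hv
      rw [nrm2] at this
      nlinarith [Real.sq_sqrt h0]
    simp only [dot2]
    nlinarith [sq_nonneg v.2, sq_nonneg x, mul_pos hx hx, sq_nonneg (r*x), sq_nonneg v.1,
      mul_nonneg (sq_nonneg x) (sq_nonneg v.1), sq_nonneg (r - 1), sq_nonneg (r + 1)]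
  · simp only [cos2, dot2, nrm2]
    ring_nf
  · simp [cos2, dot2, hnb]
end

section
/- In the same ℝ² configuration (a_1 = (−x, rx) = −c_1, a_2 = (−x, −rx) = −c_2, x > 0, r > 1, PCA bias direction b = (0,1)), the target t = (1,0) satisfies cos(t,b) = 0 (Direct Bias reports zero bias), yet s(t,{a_1,a_2}) ≠ s(t,{c_1,c_2}), i.e., t is biased according to the association-difference definition. -/
/-- In the ℝ² configuration `a₁ = (−x, rx) = −c₁`, `a₂ = (−x, −rx) = −c₂`,
`x > 0`, `r > 1`, with PCA bias direction `b = (0,1)`, the target `t = (1,0)`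
satisfies `cos(t,b) = 0` (the Direct Bias reports no bias), yet
`s(t,{a₁,a₂}) ≠ s(t,{c₁,c₂})`, i.e. `t` is biased. -/
theorem directBias_not_unbiased_trustworthy_underestimates (x r : ℝ) (hx : 0 < x) (hr : 1 < r)
    (a₁ a₂ c₁ c₂ b t : ℝ × ℝ)
    (ha₁ : a₁ = (-x, r * x)) (hc₁ : c₁ = (x, -(r * x)))
    (ha₂ : a₂ = (-x, -(r * x))) (hc₂ : c₂ = (x, r * x))
    (hb : b = (0, 1)) (ht : t = (1, 0)) :
    cos2 t b = 0 ∧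
    (1 / 2 : ℝ) * (cos2 t a₁ + cos2 t a₂) ≠ (1 / 2 : ℝ) * (cos2 t c₁ + cos2 t c₂) := by
  subst ha₁ ha₂ hc₁ hc₂ hb ht
  have hN : (0:ℝ) < Real.sqrt ((-x) ^ 2 + (r * x) ^ 2) := by
    apply Real.sqrt_pos.2
    nlinarith
  have hNt : nrm2 (1, 0) = 1 := by
    simp [nrm2]
  have hne1 : nrm2 (-x, r * x) = Real.sqrt ((-x) ^ 2 + (r * x) ^ 2) := rfl
  have hne2 : nrm2 (-x, -(r * x)) = Real.sqrt ((-x) ^ 2 + (r * x) ^ 2) := by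
    simp [nrm2]
  have hne3 : nrm2 (x, -(r * x)) = Real.sqrt ((-x) ^ 2 + (r * x) ^ 2) := by
    simp [nrm2]
  have hne4 : nrm2 (x, r * x) = Real.sqrt ((-x) ^ 2 + (r * x) ^ 2) := by
    simp [nrm2]
  constructor
  · simp [cos2, dot2]
  · simp only [cos2, dot2, hNt, hne1, hne2, hne3, hne4]
    set N := Real.sqrt ((-x) ^ 2 + (r * x) ^ 2) with hNdef
    intro h
    field_simp at h
    nlinarith [mul_pos hx (mul_pos hN hN)]
end

section
/- If m ≥ 1 and A, B are attribute sets of nonzero vectors with â ≠ b̂ (means of normalized vectors), then setting x_1 = ... = x_m = â − b̂ and y_1 = ... = y_m = −(â − b̂) yields WEAT effect size d(X,Y,A,B) = 2, where the effect size is defined on the associations s(w,A,B) = cos(w, â − b̂)·‖â − b̂‖. In particular the extreme value 2 is attainable regardless of the attribute sets, so WEAT's effect size is magnitude-comparable. -/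
open Finset

lemma cosSim_self {d : ℕ} {v : EuclideanSpace ℝ (Fin d)} (hv : v ≠ 0) : cosSim v v = 1 := by
  have : ‖v‖ ≠ 0 := norm_ne_zero_iff.mpr hv
  rw [cosSim, real_inner_self_eq_norm_mul_norm, div_self (mul_ne_zero this this)]

lemma cosSim_neg_left {d : ℕ} (u v : EuclideanSpace ℝ (Fin d)) :
    cosSim (-u) v = -cosSim u v := by
  rw [cosSim, cosSim, inner_neg_left, norm_neg, neg_div]

theorem effectSize_eq_two_of_const_of_neg_const {m : ℕ} (hm : m ≠ 0) {c : ℝ} (hc : 0 < c)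
    (u w : Fin m → ℝ) (hu : ∀ i, u i = c) (hw : ∀ i, w i = -c) :
    (let μ : ℝ := (∑ i, u i + ∑ i, w i) / (2 * m)
     let σ : ℝ := Real.sqrt ((∑ i, (u i - μ) ^ 2 + ∑ i, (w i - μ) ^ 2) / (2 * m))
     ((1 / (m : ℝ)) * ∑ i, u i - (1 / (m : ℝ)) * ∑ i, w i) / σ = 2) := by
  intro μ σ
  have hm' : (m : ℝ) ≠ 0 := Nat.cast_ne_zero.mpr hm
  have hμ : μ = 0 := by
    simp only [μ, hu, hw, sum_const, card_univ, Fintype.card_fin, nsmul_eq_mul]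
    ring
  have hσ : σ = c := by
    have : ((m : ℝ) * c ^ 2 + m * (-c) ^ 2) / (2 * m) = c ^ 2 := by field_simp; ring
    simp only [σ, hμ, sub_zero, hu, hw, sum_const, card_univ, Fintype.card_fin, nsmul_eq_mul,
      this, Real.sqrt_sq hc.le]
  simp only [hσ, hu, hw, sum_const, card_univ, Fintype.card_fin, nsmul_eq_mul]
  field_simp
  ring

theorem weat_effect_size_two_attainable_general (d m : ℕ) (hm : 1 ≤ m)
    (ahat bhat : EuclideanSpace ℝ (Fin d))
    (hab : ahat ≠ bhat)
    (s : EuclideanSpace ℝ (Fin d) → ℝ)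
    (hs : s = fun w => cosSim w (ahat - bhat) * ‖ahat - bhat‖)
    (X Y : Fin m → EuclideanSpace ℝ (Fin d))
    (hX : ∀ i, X i = ahat - bhat) (hY : ∀ i, Y i = -(ahat - bhat)) :
    (let μ : ℝ := (∑ i, s (X i) + ∑ i, s (Y i)) / (2 * m)
     let σ : ℝ := Real.sqrt ((∑ i, (s (X i) - μ) ^ 2 + ∑ i, (s (Y i) - μ) ^ 2) / (2 * m))
     ((1 / (m : ℝ)) * ∑ i, s (X i) - (1 / (m : ℝ)) * ∑ i, s (Y i)) / σ = 2) := by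
  subst hs
  have hv : ahat - bhat ≠ 0 := sub_ne_zero.mpr hab
  refine effectSize_eq_two_of_const_of_neg_const (by omega) (norm_pos_iff.mpr hv) _ _ (fun i => ?_) (fun i => ?_)
  · dsimp only
    rw [hX i, cosSim_self hv, one_mul]
  · dsimp only
    rw [hY i, cosSim_neg_left, cosSim_self hv, neg_one_mul]

/-- WEAT's effect size is magnitude-comparable: for any attribute sets `A, B` of
nonzero vectors with distinct normalized means `â ≠ b̂`, taking
`x₁ = ... = xₘ = â − b̂` and `y₁ = ... = yₘ = −(â − b̂)` yields effect size `2`,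
where the associations are `s(w,A,B) = cos(w, â−b̂)·‖â−b̂‖`. -/
theorem weat_effect_size_two_attainable (d m : ℕ) (hm : 1 ≤ m)
    (A B : Finset (EuclideanSpace ℝ (Fin d)))
    (hA0 : ∀ a ∈ A, a ≠ 0) (hB0 : ∀ b ∈ B, b ≠ 0)
    (ahat bhat : EuclideanSpace ℝ (Fin d))
    (hahat : ahat = (A.card : ℝ)⁻¹ • ∑ a ∈ A, ‖a‖⁻¹ • a)
    (hbhat : bhat = (B.card : ℝ)⁻¹ • ∑ b ∈ B, ‖b‖⁻¹ • b)
    (hab : ahat ≠ bhat)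
    (s : EuclideanSpace ℝ (Fin d) → ℝ)
    (hs : s = fun w => cosSim w (ahat - bhat) * ‖ahat - bhat‖)
    (X Y : Fin m → EuclideanSpace ℝ (Fin d))
    (hX : ∀ i, X i = ahat - bhat) (hY : ∀ i, Y i = -(ahat - bhat)) :
    (let μ : ℝ := (∑ i, s (X i) + ∑ i, s (Y i)) / (2 * m)
     let σ : ℝ := Real.sqrt ((∑ i, (s (X i) - μ) ^ 2 + ∑ i, (s (Y i) - μ) ^ 2) / (2 * m))
     ((1 / (m : ℝ)) * ∑ i, s (X i) - (1 / (m : ℝ)) * ∑ i, s (Y i)) / σ = 2) :=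
  weat_effect_size_two_attainable_general d m hm ahat bhat hab s hs X Y hX hY
end
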